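/- arXiv:math/0112223 — 2 statements merged into one kernel-verified Lean document; each statement's English description precedes it below -/
import Mathlib

section
/- The two defining expressions of Nakajima's bicharacter agree: for all monomials m₁, m₂ in the variables V_{i,a}, W_{i,a} (ADE case), Σ_{i,a} (v_{i,aq}(m₁)u_{i,a}(m₂) + w_{i,aq}(m₁)v_{i,a}(m₂)) = Σ_{i,a} (u_{i,a}(m₁)v_{i,aq^{-1}}(m₂) + v_{i,a}(m₁)w_{i,aq^{-1}}(m₂)). -/
/-!
Expanding `u`, both sides become signed sums of pairings
`Σ_{p} f(p) Σ_{j ∈ S(p.1)} g(j, p.2 t)` between the exponent vectors of `m₁` and `m₂`.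
Such a pairing is unchanged when the roles of `f` and `g` are swapped and `t` is replaced
by `t⁻¹`, provided the relation `j ∈ S i` is symmetric: for `S i = {i}` this is reindexing
by a translation, and for the neighbours `{j | C j i = -1}` it is the symmetry of `C`.
The terms of the two sides then match one by one.
-/

open Finset

variable {I G : Type*}

/-- In the ADE setting, a monomial in the variables `V_{i,a}, W_{i,a}` is encoded by
its pair of exponent vectors `(v, w) : (I × G →₀ ℕ) × (I × G →₀ ℕ)`.
`uIA C q m i a` is the quantity
`u_{i,a}(m) = w_{i,a}(m) - v_{i,aq⁻¹}(m) - v_{i,aq}(m) + Σ_{j : C_{j,i} = -1} v_{j,a}(m)`. -/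
def uIA [Fintype I] [DecidableEq G] [Group G] (C : I → I → ℤ) (q : G)
    (m : (I × G →₀ ℕ) × (I × G →₀ ℕ)) (i : I) (a : G) : ℤ :=
  (m.2 (i, a) : ℤ) - (m.1 (i, a * q⁻¹) : ℤ) - (m.1 (i, a * q) : ℤ)
    + ∑ j ∈ univ.filter (fun j => C j i = -1), (m.1 (j, a) : ℤ)

namespace Finsupp

section Pairing

variable {α R : Type*} [CommSemiring R]

theorem sum_mul_sum_ite_comm (f g : α →₀ ℕ) (r : α → α → Prop) [DecidableRel r] :
    (f.sum fun p c => (c : R) * g.sum fun p' d => if r p p' then (d : R) else 0) =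
      g.sum fun p' d => (d : R) * f.sum fun p c => if r p p' then (c : R) else 0 := by
  simp only [Finsupp.sum, Finset.mul_sum, mul_ite, mul_zero]
  rw [Finset.sum_comm]
  exact Finset.sum_congr rfl fun _ _ => Finset.sum_congr rfl fun _ _ => by rw [mul_comm]

theorem sum_cast_eq_sum_ite [DecidableEq α] (g : α →₀ ℕ) (s : Finset α) :
    ∑ x ∈ s, (g x : R) = g.sum fun x d => if x ∈ s then (d : R) else 0 := by
  rw [Finsupp.sum, ← Finset.sum_filter]
  symm
  refine Finset.sum_subset (fun x hx => (mem_filter.1 hx).2) fun x _ hx => ?_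
  simp_all

end Pairing

section Translation

variable {R : Type*} [CommSemiring R] [DecidableEq I] [DecidableEq G]

theorem sum_cast_slice_eq_sum_ite (h : I × G →₀ ℕ) (S : Finset I) (b : G) :
    ∑ j ∈ S, (h (j, b) : R) = h.sum fun x d => if x ∈ S ×ˢ {b} then (d : R) else 0 := by
  rw [← sum_cast_eq_sum_ite, Finset.sum_product]
  simp only [sum_singleton]

variable [Group G]

theorem sum_mul_sum_translate (S : I → Finset I) (hS : ∀ i j, i ∈ S j ↔ j ∈ S i)
    {t s : G} (hts : t * s = 1) (f g : I × G →₀ ℕ) :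
    (f.sum fun p c => (c : R) * ∑ j ∈ S p.1, (g (j, p.2 * t) : R)) =
      g.sum fun p c => (c : R) * ∑ j ∈ S p.1, (f (j, p.2 * s) : R) := by
  simp only [sum_cast_slice_eq_sum_ite]
  rw [sum_mul_sum_ite_comm]
  have hs : s = t⁻¹ := eq_inv_of_mul_eq_one_right hts
  congr! 8 with p _ p' _
  simp only [mem_product, mem_singleton, hs, eq_mul_inv_iff_mul_eq, hS p.1 p'.1, eq_comm]

theorem sum_mul_translate {t s : G} (hts : t * s = 1) (f g : I × G →₀ ℕ) :
    (f.sum fun p c => (c : R) * g (p.1, p.2 * t)) =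
      g.sum fun p c => (c : R) * f (p.1, p.2 * s) := by
  simpa using sum_mul_sum_translate (R := R) (fun i => {i}) (by simp [eq_comm]) hts f g

end Translation

end Finsupp

theorem sum_mul_uIA [Fintype I] [DecidableEq G] [Group G] (C : I → I → ℤ) (q : G)
    (f : I × G →₀ ℕ) (m : (I × G →₀ ℕ) × (I × G →₀ ℕ)) (t : G) :
    (f.sum fun p c => (c : ℤ) * uIA C q m p.1 (p.2 * t)) =
      (f.sum fun p c => (c : ℤ) * m.2 (p.1, p.2 * t))
        - (f.sum fun p c => (c : ℤ) * m.1 (p.1, p.2 * (t * q⁻¹)))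
        - (f.sum fun p c => (c : ℤ) * m.1 (p.1, p.2 * (t * q)))
        + f.sum fun p c =>
            (c : ℤ) * ∑ j ∈ univ.filter (fun j => C j p.1 = -1), (m.1 (j, p.2 * t) : ℤ) := by
  simp only [uIA, mul_assoc, mul_sub, mul_add, Finsupp.sum_add, Finsupp.sum_sub]

theorem nakajima_bicharacter_expressions_agree_general
    [Fintype I] [DecidableEq G] [CommGroup G]
    (C : I → I → ℤ) (hsym : ∀ i j, C i j = C j i)
    (q : G)
    (m₁ m₂ : (I × G →₀ ℕ) × (I × G →₀ ℕ)) :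
    (m₁.1.sum fun p c => (c : ℤ) * uIA C q m₂ p.1 (p.2 * q⁻¹)) +
      (m₁.2.sum fun p c => (c : ℤ) * (m₂.1 (p.1, p.2 * q⁻¹) : ℤ)) =
    (m₂.1.sum fun p c => (c : ℤ) * uIA C q m₁ p.1 (p.2 * q)) +
      (m₂.2.sum fun p c => (c : ℤ) * (m₁.1 (p.1, p.2 * q) : ℤ)) := by
  classical
  have hN : ∀ i j, i ∈ univ.filter (C · j = -1) ↔ j ∈ univ.filter (C · i = -1) := by
    simp [hsym]
  rw [sum_mul_uIA, sum_mul_uIA, Finsupp.sum_mul_translate (inv_mul_cancel q) m₁.1 m₂.2,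
    Finsupp.sum_mul_translate (t := q⁻¹ * q⁻¹) (s := q * q) (by group) m₁.1 m₂.1,
    Finsupp.sum_mul_translate (t := q⁻¹ * q) (s := q * q⁻¹) (by group) m₁.1 m₂.1,
    Finsupp.sum_mul_sum_translate _ hN (inv_mul_cancel q) m₁.1 m₂.1,
    Finsupp.sum_mul_translate (inv_mul_cancel q) m₁.2 m₂.1]
  ring

/-- The two defining expressions of Nakajima's bicharacter agree (ADE case):
`Σ_{i,a} (v_{i,aq}(m₁)u_{i,a}(m₂) + w_{i,aq}(m₁)v_{i,a}(m₂))
  = Σ_{i,a} (u_{i,a}(m₁)v_{i,aq⁻¹}(m₂) + v_{i,a}(m₁)w_{i,aq⁻¹}(m₂))`.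
The (finitely supported) sums over all `(i,a)` are expressed via `Finsupp.sum`,
after reindexing `a`. -/
theorem nakajima_bicharacter_expressions_agree
    [Fintype I] [DecidableEq I] [DecidableEq G] [CommGroup G]
    (C : I → I → ℤ) (hsym : ∀ i j, C i j = C j i) (hdiag : ∀ i, C i i = 2)
    (q : G) (hq : ∀ n : ℤ, q ^ n = 1 → n = 0)
    (m₁ m₂ : (I × G →₀ ℕ) × (I × G →₀ ℕ)) :
    (m₁.1.sum fun p c => (c : ℤ) * uIA C q m₂ p.1 (p.2 * q⁻¹)) +
      (m₁.2.sum fun p c => (c : ℤ) * (m₂.1 (p.1, p.2 * q⁻¹) : ℤ)) =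
    (m₂.1.sum fun p c => (c : ℤ) * uIA C q m₁ p.1 (p.2 * q)) +
      (m₂.2.sum fun p c => (c : ℤ) * (m₁.1 (p.1, p.2 * q) : ℤ)) :=
  nakajima_bicharacter_expressions_agree_general C hsym q m₁ m₂
end

section
/- Let m₁, ..., m_p be monomials in Ŷ_t (ADE case) such that for some fixed a, u_{i,a}(m_r) = 1 and u_{i,b}(m_r) = 0 for all b ≠ a and all r. Then there exists α ∈ ℤ with (m₁*(1+V_{i,aq})) * (m₂*(1+V_{i,aq})) * ... * (m_p*(1+V_{i,aq})) = t^α · m₁⋯m_p · Σ_{r=0}^{p} t^{r(p-r)}·[p choose r]_t · V_{i,aq}^r, where * is the multiplication twisted by Nakajima's bicharacter d_N. -/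
open Finset LaurentPolynomial

variable {I G : Type*}

/-- The Gaussian binomial coefficient in the variable `q = t²`. -/
noncomputable def gaussBinom : ℕ → ℕ → LaurentPolynomial ℤ
  | _, 0 => 1
  | 0, _ + 1 => 0
  | n + 1, k + 1 => gaussBinom n k + T 2 ^ (k + 1) * gaussBinom n (k + 1)

/-- The balanced `t`-binomial `[n choose k]_t = t^{-k(n-k)}·[n choose k]_{q=t²}`. -/
noncomputable def tBinom (n k : ℕ) : LaurentPolynomial ℤ :=
  T (-((k : ℤ) * ((n : ℤ) - (k : ℤ)))) * gaussBinom n k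

/-- Nakajima's bicharacter `d_N`. -/
def dN [Fintype I] [DecidableEq G] [Group G] (C : I → I → ℤ) (q : G)
    (m₁ m₂ : (I × G →₀ ℕ) × (I × G →₀ ℕ)) : ℤ :=
  (m₁.1.sum fun p c => (c : ℤ) * uIA C q m₂ p.1 (p.2 * q⁻¹)) +
    (m₁.2.sum fun p c => (c : ℤ) * (m₂.1 (p.1, p.2 * q⁻¹) : ℤ))

/-- The star product on `Ŷ_t` twisted by `d_N`. -/
noncomputable def star [Fintype I] [DecidableEq G] [Group G] (C : I → I → ℤ) (q : G)
    (x y : AddMonoidAlgebra (LaurentPolynomial ℤ) ((I × G →₀ ℕ) × (I × G →₀ ℕ))) :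
    AddMonoidAlgebra (LaurentPolynomial ℤ) ((I × G →₀ ℕ) × (I × G →₀ ℕ)) :=
  x.coeff.sum fun m₁ c₁ => y.coeff.sum fun m₂ c₂ =>
    AddMonoidAlgebra.single (m₁ + m₂) (T (2 * dN C q m₁ m₂) * c₁ * c₂)

/-- The monomial `V_{i,b}`. -/
noncomputable def Vmon [Group G] (i : I) (b : G) : (I × G →₀ ℕ) × (I × G →₀ ℕ) :=
  (Finsupp.single (i, b) 1, 0)

/-! Write `V = V_{i,aq}`. Since `d_N(m_r, V) = u_{i,aq²}(m_r) = 0`, each factor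
`m_r * (1 + V)` is simply `m_r + m_r V`. Multiplying the expansion `Σ_r c_r · M V^r` of the
last `p` factors on the left by `m + m V`, the term `m` only contributes the constant
`t^{2 d_N(m, M)}`, while `m V` picks up the extra `t^{2(p - r)}` because
`d_N(V, M V^r) = u_{i,a}(M) + r · u_{i,a}(V) = p - r`. The coefficients therefore satisfy the
`q`-Pascal rule `[p+1, r+1] = [p, r+1] + q^{p-r} [p, r]` of the Gaussian binomials in `q = t²`,
and `t^{r(p-r)} [p choose r]_t` is exactly that Gaussian binomial. -/

local notation "𝓜" => (I × G →₀ ℕ) × (I × G →₀ ℕ)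

local notation "𝓨" => AddMonoidAlgebra (LaurentPolynomial ℤ) 𝓜

lemma gaussBinom_zero_right (n : ℕ) : gaussBinom n 0 = 1 := by cases n <;> rfl

lemma gaussBinom_of_lt {n k : ℕ} (h : n < k) : gaussBinom n k = 0 := by
  induction n generalizing k with
  | zero => cases k with | zero => omega | succ k => rfl
  | succ n ih =>
    cases k with
    | zero => omega
    | succ k => rw [gaussBinom, ih (by omega), ih (by omega), mul_zero, add_zero]

lemma gaussBinom_succ_succ' (n k : ℕ) :
    gaussBinom (n + 1) (k + 1) =
      gaussBinom n (k + 1) + T (2 * ((n : ℤ) - k)) * gaussBinom n k := by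
  induction n generalizing k with
  | zero => cases k <;> simp [gaussBinom]
  | succ n ih =>
    rw [gaussBinom.eq_3 (n + 1) k]
    cases k with
    | zero =>
      conv_lhs => rw [ih 0]
      rw [gaussBinom.eq_3 n 0]
      simp only [gaussBinom_zero_right, T_pow, mul_add, ← mul_assoc, ← T_add]
      push_cast; ring_nf
    | succ k =>
      conv_lhs => rw [ih k, ih (k + 1)]
      rw [gaussBinom.eq_3 n k, gaussBinom.eq_3 n (k + 1)]
      simp only [T_pow, mul_add, ← mul_assoc, ← T_add]
      push_cast; ring_nf

lemma T_mul_tBinom (n k : ℕ) : T ((k : ℤ) * ((n : ℤ) - k)) * tBinom n k = gaussBinom n k := by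
  rw [tBinom, ← mul_assoc, ← T_add, add_neg_cancel, T_zero, one_mul]

lemma Finset.sum_range_add_sum_range_eq_sum_range_succ {M : Type*} [AddCommMonoid M]
    {f g h : ℕ → M} {n : ℕ} (hf : f (n + 1) = 0) (h0 : h 0 = f 0)
    (hsucc : ∀ k, h (k + 1) = f (k + 1) + g k) :
    ∑ k ∈ range (n + 1), f k + ∑ k ∈ range (n + 1), g k = ∑ k ∈ range (n + 2), h k := by
  rw [sum_range_succ' h, sum_congr rfl fun k _ => hsucc k, sum_add_distrib, h0,
    sum_range_succ (fun k => f (k + 1)), hf, add_zero, sum_range_succ' f]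
  abel

lemma Vmon_fst_apply_mul_inv [DecidableEq I] [DecidableEq G] [Group G] (q : G) (i : I) (c : G)
    (p : I × G) :
    (Vmon i c).1 (p.1, p.2 * q⁻¹) = if (i, c * q) = p then 1 else 0 := by
  simp [Vmon, Finsupp.single_apply, eq_mul_inv_iff_mul_eq, Prod.ext_iff]

section Bicharacter

variable [Fintype I] [DecidableEq G] [Group G] (C : I → I → ℤ) (q : G)

lemma uIA_add (m n : 𝓜) (i : I) (b : G) :
    uIA C q (m + n) i b = uIA C q m i b + uIA C q n i b := by
  simp only [uIA, Prod.fst_add, Prod.snd_add, Finsupp.add_apply, Nat.cast_add, sum_add_distrib]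
  ring

lemma uIA_sum {ι : Type*} (s : Finset ι) (f : ι → 𝓜) (i : I) (b : G) :
    uIA C q (∑ r ∈ s, f r) i b = ∑ r ∈ s, uIA C q (f r) i b :=
  map_sum (AddMonoidHom.mk' (uIA C q · i b) fun m n => uIA_add C q m n i b) f s

lemma uIA_nsmul (k : ℕ) (m : 𝓜) (i : I) (b : G) :
    uIA C q (k • m) i b = k * uIA C q m i b := by
  rw [← nsmul_eq_mul]
  exact map_nsmul (AddMonoidHom.mk' (uIA C q · i b) fun m n => uIA_add C q m n i b) k m

lemma uIA_Vmon_self (hq : q ^ 2 ≠ 1) (i : I) (a : G) :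
    uIA C q (Vmon i (a * q)) i a = -1 := by
  have hq1 : q ≠ 1 := by rintro rfl; exact hq (one_pow 2)
  have hqq : q ≠ q⁻¹ := fun h => hq (by rw [pow_two]; nth_rewrite 2 [h]; exact mul_inv_cancel q)
  simp [uIA, Vmon, hq1, hqq]

lemma uIA_Vmon_apply [DecidableEq I] (hsym : ∀ i j, C i j = C j i) (i : I) (c : G)
    (p : I × G) :
    uIA C q (Vmon i c) p.1 (p.2 * q⁻¹) =
      -(if (i, c * q * q) = p then 1 else 0) - (if (i, c) = p then 1 else 0) +
        ∑ k ∈ univ.filter (fun k => C k i = -1), if (k, c * q) = p then 1 else 0 := by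
  obtain ⟨j, b⟩ := p
  by_cases hb : c * q = b <;>
    simp [uIA, Vmon, Finsupp.single_apply, eq_mul_inv_iff_mul_eq, hb, hsym i j]

lemma dN_add_left (m n x : 𝓜) : dN C q (m + n) x = dN C q m x + dN C q n x := by
  simp only [dN, Prod.fst_add, Prod.snd_add]
  rw [Finsupp.sum_add_index' (by simp) (by intros; push_cast; ring),
    Finsupp.sum_add_index' (by simp) (by intros; push_cast; ring)]
  ring

lemma dN_add_right (m x y : 𝓜) : dN C q m (x + y) = dN C q m x + dN C q m y := by
  simp only [dN, uIA_add, Prod.fst_add, Finsupp.add_apply, Nat.cast_add, mul_add,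
    Finsupp.sum_add]
  ring

lemma dN_zero_right (m : 𝓜) : dN C q m 0 = 0 := by
  simp [dN, uIA]

lemma dN_nsmul_right (k : ℕ) (m x : 𝓜) : dN C q m (k • x) = k * dN C q m x := by
  rw [← nsmul_eq_mul]
  exact map_nsmul (AddMonoidHom.mk' (dN C q m) (dN_add_right C q m)) k x

lemma dN_Vmon_left (i : I) (b : G) (m : 𝓜) : dN C q (Vmon i b) m = uIA C q m i (b * q⁻¹) := by
  simp [dN, Vmon]

lemma dN_Vmon_right (hsym : ∀ i j, C i j = C j i) (m : 𝓜) (i : I) (c : G) :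
    dN C q m (Vmon i c) = uIA C q m i (c * q) := by
  classical
  simp only [dN, uIA_Vmon_apply C q hsym, Vmon_fst_apply_mul_inv q, Nat.cast_ite, Nat.cast_one,
    Nat.cast_zero, mul_add, mul_sub, mul_neg, Finset.mul_sum, mul_ite, mul_one, mul_zero,
    Finsupp.sum, Finset.sum_add_distrib, Finset.sum_sub_distrib, Finset.sum_neg_distrib]
  rw [Finset.sum_comm (s := m.1.support)]
  have hcast : ∀ n : ℕ, (if n = 0 then 0 else (n : ℤ)) = n :=
    fun n => ite_eq_right_iff.2 fun h => by rw [h, Nat.cast_zero]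
  simp only [Finset.sum_ite_eq, Finsupp.mem_support_iff, ne_eq, ite_not, hcast, uIA,
    mul_inv_cancel_right]
  ring

end Bicharacter

section StarProduct

variable [Fintype I] [DecidableEq G] [Group G] (C : I → I → ℤ) (q : G)

open AddMonoidAlgebra

lemma star_single_single (m m' : 𝓜) (c c' : LaurentPolynomial ℤ) :
    star C q (single m c) (single m' c') = single (m + m') (T (2 * dN C q m m') * c * c') := by
  simp [_root_.star, coeff_single]

lemma star_add_left (x y z : 𝓨) : star C q (x + y) z = star C q x z + star C q y z := by
  unfold _root_.star
  rw [coeff_add, Finsupp.sum_add_index' (by simp)]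
  intro m c₁ c₂
  rw [← Finsupp.sum_add]
  refine Finsupp.sum_congr fun m' _ => ?_
  rw [← single_add, mul_add, add_mul]

lemma star_add_right (x y z : 𝓨) : star C q x (y + z) = star C q x y + star C q x z := by
  unfold _root_.star
  rw [coeff_add, ← Finsupp.sum_add]
  refine Finsupp.sum_congr fun m _ => ?_
  rw [Finsupp.sum_add_index' (by simp) (by intros; rw [mul_add, single_add])]

lemma star_sum_right {ι : Type*} (x : 𝓨) (s : Finset ι) (f : ι → 𝓨) :
    star C q x (∑ k ∈ s, f k) = ∑ k ∈ s, star C q x (f k) :=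
  map_sum (AddMonoidHom.mk' (star C q x) (star_add_right C q x)) f s

end StarProduct

section DominantFactors

variable [Fintype I] [DecidableEq G] [Group G] {C : I → I → ℤ} {q : G} {i : I} {a : G}

open AddMonoidAlgebra

lemma dN_Vmon_eq_zero_of_dominant (hsym : ∀ i j, C i j = C j i) (hq : q ^ 2 ≠ 1)
    {m : 𝓜} (hm : ∀ b, uIA C q m i b = if b = a then 1 else 0) :
    dN C q m (Vmon i (a * q)) = 0 := by
  have haqq : a * q * q ≠ a := by
    rw [mul_assoc, ← pow_two, Ne, mul_eq_left]; exact hq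
  rw [dN_Vmon_right C q hsym, hm, if_neg haqq]

lemma star_one_add_Vmon_of_dominant (hsym : ∀ i j, C i j = C j i) (hq : q ^ 2 ≠ 1)
    {m : 𝓜} (hm : ∀ b, uIA C q m i b = if b = a then 1 else 0) :
    star C q (single m 1) (1 + single (Vmon i (a * q)) 1) =
      single m 1 + single (m + Vmon i (a * q)) 1 := by
  rw [one_def (R := LaurentPolynomial ℤ), star_add_right, star_single_single, star_single_single,
    dN_zero_right, dN_Vmon_eq_zero_of_dominant hsym hq hm]
  simp

lemma star_dominant_factor_sum (hsym : ∀ i j, C i j = C j i) (hq : q ^ 2 ≠ 1)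
    {m M : 𝓜} (hm : ∀ b, uIA C q m i b = if b = a then 1 else 0)
    {p : ℕ} (hM : uIA C q M i a = p) (c : LaurentPolynomial ℤ) :
    star C q (single m 1 + single (m + Vmon i (a * q)) 1)
        (∑ r ∈ range (p + 1), single (M + r • Vmon i (a * q)) (c * gaussBinom p r)) =
      ∑ r ∈ range (p + 2),
        single (m + M + r • Vmon i (a * q)) (T (2 * dN C q m M) * c * gaussBinom (p + 1) r) := by
  set V := Vmon i (a * q)
  set β := dN C q m M
  have hdN_m : ∀ r : ℕ, dN C q m (M + r • V) = β := fun r => by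
    rw [dN_add_right, dN_nsmul_right, dN_Vmon_eq_zero_of_dominant hsym hq hm, mul_zero, add_zero]
  have hdN_mV : ∀ r : ℕ, dN C q (m + V) (M + r • V) = β + (p - r) := fun r => by
    rw [dN_add_left, hdN_m, dN_Vmon_left, mul_inv_cancel_right, uIA_add, uIA_nsmul, hM,
      uIA_Vmon_self C q hq]
    ring
  have hmon : ∀ r : ℕ, m + V + (M + r • V) = m + M + (r + 1) • V := fun r => by
    rw [succ_nsmul]; abel
  rw [star_add_left, star_sum_right, star_sum_right]
  simp only [star_single_single, hdN_m, hdN_mV, hmon, ← add_assoc]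
  refine sum_range_add_sum_range_eq_sum_range_succ ?_ ?_ fun k => ?_
  · rw [gaussBinom_of_lt (Nat.lt_succ_self p), mul_zero, mul_zero, single_zero]
  · simp only [gaussBinom_zero_right, mul_one]
  · rw [← single_add, gaussBinom_succ_succ', mul_add 2 β, T_add]
    ring_nf

lemma foldr_star_dominant_factors (hsym : ∀ i j, C i j = C j i) (hq : q ^ 2 ≠ 1) (p : ℕ)
    (ms : Fin p → 𝓜)
    (hms : ∀ r b, uIA C q (ms r) i b = if b = a then 1 else 0) :
    ∃ α : ℤ,
      List.foldr (star C q) (single 0 1)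
        (List.ofFn fun r => star C q (single (ms r) 1) (1 + single (Vmon i (a * q)) 1)) =
      ∑ r ∈ range (p + 1),
        single ((∑ s, ms s) + r • Vmon i (a * q)) (T α * gaussBinom p r) := by
  induction p with
  | zero => exact ⟨0, by simp [gaussBinom_zero_right]⟩
  | succ p ih =>
    obtain ⟨α, hα⟩ := ih (fun r => ms r.succ) fun r => hms r.succ
    have hM : uIA C q (∑ s : Fin p, ms s.succ) i a = p := by
      simp [uIA_sum, hms]
    refine ⟨2 * dN C q (ms 0) (∑ s : Fin p, ms s.succ) + α, ?_⟩
    rw [List.ofFn_succ, List.foldr_cons, hα, star_one_add_Vmon_of_dominant hsym hq (hms 0),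
      star_dominant_factor_sum hsym hq (hms 0) hM, Fin.sum_univ_succ]
    simp only [T_add, mul_assoc]

end DominantFactors

theorem star_product_dominant_factors_general
    [Fintype I] [DecidableEq G] [CommGroup G]
    (C : I → I → ℤ) (hsym : ∀ i j, C i j = C j i)
    (q : G) (hq : ∀ n : ℤ, q ^ n = 1 → n = 0)
    (p : ℕ) (ms : Fin p → (I × G →₀ ℕ) × (I × G →₀ ℕ)) (i : I) (a : G)
    (hms : ∀ (r : Fin p) (b : G),
      uIA C q (ms r) i b = if b = a then 1 else 0) :
    ∃ α : ℤ,
      List.foldr (star C q) (AddMonoidAlgebra.single 0 1)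
        (List.ofFn fun r : Fin p =>
          star C q (AddMonoidAlgebra.single (ms r) 1)
            (1 + AddMonoidAlgebra.single (Vmon i (a * q)) 1)) =
      ∑ r ∈ range (p + 1),
        (T α * T ((r : ℤ) * ((p : ℤ) - (r : ℤ))) * tBinom p r) •
          AddMonoidAlgebra.single ((∑ s : Fin p, ms s) + r • Vmon i (a * q)) 1 := by
  have hq2 : q ^ 2 ≠ 1 := fun h => two_ne_zero (hq 2 (by exact_mod_cast h))
  obtain ⟨α, hα⟩ := foldr_star_dominant_factors hsym hq2 p ms hms
  refine ⟨α, hα.trans (sum_congr rfl fun r _ => ?_)⟩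
  rw [AddMonoidAlgebra.smul_single', mul_one, mul_assoc, T_mul_tBinom]

/-- Let `m₁, …, m_p` be monomials such that for some fixed `a`, `u_{i,a}(m_r) = 1`
and `u_{i,b}(m_r) = 0` for all `b ≠ a` and all `r`. Then there exists `α ∈ ℤ` with
`(m₁*(1+V_{i,aq})) * ⋯ * (m_p*(1+V_{i,aq}))
  = t^α · m₁⋯m_p · Σ_{r=0}^p t^{r(p-r)}·[p choose r]_t · V_{i,aq}^r`,
where `*` is the product twisted by Nakajima's bicharacter `d_N`. -/
theorem star_product_dominant_factors
    [Fintype I] [DecidableEq I] [DecidableEq G] [CommGroup G]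
    (C : I → I → ℤ) (hsym : ∀ i j, C i j = C j i) (hdiag : ∀ i, C i i = 2)
    (q : G) (hq : ∀ n : ℤ, q ^ n = 1 → n = 0)
    (p : ℕ) (ms : Fin p → (I × G →₀ ℕ) × (I × G →₀ ℕ)) (i : I) (a : G)
    (hms : ∀ (r : Fin p) (b : G),
      uIA C q (ms r) i b = if b = a then 1 else 0) :
    ∃ α : ℤ,
      List.foldr (star C q) (AddMonoidAlgebra.single 0 1)
        (List.ofFn fun r : Fin p =>
          star C q (AddMonoidAlgebra.single (ms r) 1)
            (1 + AddMonoidAlgebra.single (Vmon i (a * q)) 1)) =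
      ∑ r ∈ range (p + 1),
        (T α * T ((r : ℤ) * ((p : ℤ) - (r : ℤ))) * tBinom p r) •
          AddMonoidAlgebra.single ((∑ s : Fin p, ms s) + r • Vmon i (a * q)) 1 :=
  star_product_dominant_factors_general C hsym q hq p ms i a hms
end
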